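/- (Convexity of the lower convex envelope f̄₂.) Let P > 2 and define f₂ : ℝ → ℝ by f₂(B) = 1/2 − (1/2)·erf(√B − √P). Set ζ₁ = ((√P − √(P−2))/2)² and ζ₂ = ((√P + √(P−2))/2)². Suppose τ₁ and τ₂ satisfy 0 < τ₁ ≤ ζ₁ and τ₂ ≥ ζ₂, let c = (f₂(τ₂) − f₂(τ₁))/(τ₂ − τ₁) and d = f₂(τ₂) − c·τ₂, and suppose that deriv f₂ τ₁ = c, deriv f₂ τ₂ = c, and f₂(B) ≥ c·B + d for all B ≥ 0. Define f̄₂ : ℝ → ℝ by f̄₂(B) = f₂(B) for B ∈ [0, τ₁] ∪ [τ₂, ∞) and f̄₂(B) = c·B + d for B ∈ (τ₁, τ₂). Then f̄₂ is convex on [0, ∞) (ConvexOn ℝ (Set.Ici 0) f̄₂). -/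

import Mathlib

open MeasureTheory ProbabilityTheory Real Set

noncomputable def erf (x : ℝ) : ℝ :=
  (2 / Real.sqrt Real.pi) * ∫ t in (0:ℝ)..x, Real.exp (-t^2)

open Filter Topology

/-!
With `q = √P` we have `f₂' B = gaussTailSlope q (√B)`, and the derivative of `gaussTailSlope q` at
`u > 0` has the sign of `2u² - 2qu + 1`, whose roots are `√ζ₁` and `√ζ₂`. So `f₂'` is nondecreasing
on `(0, ζ₁]` and on `[ζ₂, ∞)`. The derivative of `f̄₂` is `f₂'` off `(τ₁, τ₂)` and `c` on it; since
`f₂' τ₁ = f₂' τ₂ = c`, it is nondecreasing on `(0, ∞)`, and `f̄₂` is convex.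
-/

theorem hasDerivAt_erf (x : ℝ) : HasDerivAt erf (2 / √π * exp (-x ^ 2)) x := by
  have hcont : Continuous fun t : ℝ => exp (-t ^ 2) := by fun_prop
  exact ((hcont.integral_hasStrictDerivAt 0 x).hasDerivAt).const_mul _

@[fun_prop]
theorem continuous_erf : Continuous erf :=
  continuous_iff_continuousAt.2 fun x => (hasDerivAt_erf x).continuousAt

noncomputable def gaussTailSlope (q u : ℝ) : ℝ := -(exp (-(u - q) ^ 2) / (2 * √π * u))

theorem hasDerivAt_half_sub_half_erf_sqrt_sub (q : ℝ) {B : ℝ} (hB : 0 < B) :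
    HasDerivAt (fun B => 1/2 - (1/2) * erf (√B - q)) (gaussTailSlope q √B) B := by
  have hin : HasDerivAt (fun B : ℝ => √B - q) (1 / (2 * √B)) B :=
    (hasDerivAt_sqrt hB.ne').sub_const q
  have hsB : √B ≠ 0 := by positivity
  refine (((hasDerivAt_erf _).comp B hin).const_mul (1/2 : ℝ)).const_sub (1/2 : ℝ) |>.congr_deriv ?_
  unfold gaussTailSlope
  field_simp

theorem hasDerivAt_gaussTailSlope (q : ℝ) {u : ℝ} (hu : u ≠ 0) :
    HasDerivAt (gaussTailSlope q)
      (exp (-(u - q) ^ 2) * (2 * u ^ 2 - 2 * q * u + 1) / (2 * √π * u ^ 2)) u := by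
  have hexp : HasDerivAt (fun u : ℝ => exp (-(u - q) ^ 2))
      (exp (-(u - q) ^ 2) * (-2 * (u - q))) u :=
    (hasDerivAt_exp _).comp u (((hasDerivAt_id u).sub_const q).pow 2).neg |>.congr_deriv (by simp)
  have hden : HasDerivAt (fun u : ℝ => 2 * √π * u) (2 * √π) u := by
    simpa using (hasDerivAt_id u).const_mul (2 * √π)
  refine (hexp.div hden (by positivity)).neg.congr_deriv ?_
  field_simp
  ring

theorem monotoneOn_gaussTailSlope {q : ℝ} {s : Set ℝ} (hs : Convex ℝ s) (hpos : s ⊆ Ioi 0)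
    (hquad : ∀ u ∈ interior s, 0 ≤ 2 * u ^ 2 - 2 * q * u + 1) :
    MonotoneOn (gaussTailSlope q) s := by
  have hderiv (u) (hu : u ∈ s) := hasDerivAt_gaussTailSlope q (hpos hu).ne'
  refine monotoneOn_of_hasDerivWithinAt_nonneg hs
    (fun u hu => (hderiv u hu).continuousAt.continuousWithinAt)
    (fun u hu => (hderiv u (interior_subset hu)).hasDerivWithinAt) fun u hu => ?_
  have := hquad u hu
  positivity

theorem two_mul_sq_sub_add_one_eq {q r : ℝ} (hr : r ^ 2 = q ^ 2 - 2) (u : ℝ) :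
    2 * u ^ 2 - 2 * q * u + 1 = 2 * (u - (q - r) / 2) * (u - (q + r) / 2) := by
  linear_combination (1/2 : ℝ) * hr

theorem monotoneOn_gaussTailSlope_sqrt_Ioc {q r : ℝ} (hq : 0 ≤ q) (hr₀ : 0 ≤ r)
    (hr : r ^ 2 = q ^ 2 - 2) :
    MonotoneOn (fun B => gaussTailSlope q √B) (Ioc 0 (((q - r) / 2) ^ 2)) := by
  have hrq : r ≤ q := by nlinarith
  have hmono : MonotoneOn (gaussTailSlope q) (Ioc 0 ((q - r) / 2)) := by
    refine monotoneOn_gaussTailSlope (convex_Ioc _ _) (fun u hu => hu.1) fun u hu => ?_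
    rw [interior_Ioc] at hu
    rw [two_mul_sq_sub_add_one_eq hr]
    nlinarith [hu.1, hu.2]
  refine hmono.comp (sqrt_monotone.monotoneOn _) fun B hB => ⟨sqrt_pos.2 hB.1, ?_⟩
  simpa [sqrt_sq (by linarith : 0 ≤ (q - r) / 2)] using sqrt_le_sqrt hB.2

theorem monotoneOn_gaussTailSlope_sqrt_Ici {q r : ℝ} (hq : 0 ≤ q) (hr₀ : 0 ≤ r)
    (hr : r ^ 2 = q ^ 2 - 2) :
    MonotoneOn (fun B => gaussTailSlope q √B) (Ici (((q + r) / 2) ^ 2)) := by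
  have hqr : 0 < (q + r) / 2 := by nlinarith
  have hmono : MonotoneOn (gaussTailSlope q) (Ici ((q + r) / 2)) := by
    refine monotoneOn_gaussTailSlope (convex_Ici _) (fun u hu => hqr.trans_le hu) fun u hu => ?_
    rw [interior_Ici] at hu
    rw [two_mul_sq_sub_add_one_eq hr]
    nlinarith [mem_Ioi.1 hu]
  refine hmono.comp (sqrt_monotone.monotoneOn _) fun B hB => ?_
  simpa [sqrt_sq hqr.le] using sqrt_le_sqrt (mem_Ici.1 hB)

theorem HasDerivAt.of_eventuallyEq_nhdsLE_nhdsGE {f₁ f₂ g : ℝ → ℝ} {x c : ℝ}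
    (h₁ : HasDerivAt f₁ c x) (h₂ : HasDerivAt f₂ c x)
    (hl : g =ᶠ[𝓝[≤] x] f₁) (hr : g =ᶠ[𝓝[≥] x] f₂) : HasDerivAt g c x := by
  have := (h₁.hasDerivWithinAt.congr_of_eventuallyEq_of_mem hl self_mem_Iic).union
    (h₂.hasDerivWithinAt.congr_of_eventuallyEq_of_mem hr self_mem_Ici)
  rwa [Iic_union_Ici, hasDerivWithinAt_univ] at this

section TangentBridge

variable {f f' g : ℝ → ℝ} {p a b c d : ℝ}

theorem eqOn_Icc_of_tangent_bridge (hpa : p ≤ a) (hfa : f a = c * a + d) (hfb : f b = c * b + d)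
    (hg₁ : ∀ x ∈ Icc p a ∪ Ici b, g x = f x) (hg₂ : ∀ x ∈ Ioo a b, g x = c * x + d) :
    EqOn g (fun x => c * x + d) (Icc a b) := by
  intro x hx
  rcases hx.1.eq_or_lt with hax | hax
  · rw [← hax, hg₁ a (.inl ⟨hpa, le_rfl⟩), hfa]
  rcases hx.2.eq_or_lt with hxb | hxb
  · rw [hxb, hg₁ b (.inr self_mem_Ici), hfb]
  · exact hg₂ x ⟨hax, hxb⟩

theorem hasDerivAt_of_tangent_bridge (hpa : p ≤ a) (hab : a < b)
    (hf' : ∀ x ∈ Ioi p, HasDerivAt f (f' x) x)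
    (ha : f' a = c) (hb : f' b = c) (hfa : f a = c * a + d) (hfb : f b = c * b + d)
    (hg₁ : ∀ x ∈ Icc p a ∪ Ici b, g x = f x) (hg₂ : ∀ x ∈ Ioo a b, g x = c * x + d)
    {x : ℝ} (hx : x ∈ Ioi p) : HasDerivAt g (if x ∈ Ioo a b then c else f' x) x := by
  have hline (y : ℝ) : HasDerivAt (fun x => c * x + d) c y := by
    simpa using ((hasDerivAt_id y).const_mul c).add_const d
  have hgl := eqOn_Icc_of_tangent_bridge hpa hfa hfb hg₁ hg₂
  rcases lt_trichotomy x a with hxa | rfl | hax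
  · rw [if_neg fun h => h.1.not_gt hxa]
    refine (hf' x hx).congr_of_eventuallyEq (eventually_of_mem (Ioo_mem_nhds hx hxa) ?_)
    exact fun y hy => hg₁ y (.inl ⟨hy.1.le, hy.2.le⟩)
  · rw [if_neg fun h => h.1.false, ha]
    refine ((hf' x hx).congr_deriv ha).of_eventuallyEq_nhdsLE_nhdsGE (hline x) ?_ ?_
    · exact eventually_of_mem (Ioc_mem_nhdsLE hx) fun y hy => hg₁ y (.inl ⟨hy.1.le, hy.2⟩)
    · exact eventually_of_mem (Ico_mem_nhdsGE hab) fun y hy => hgl ⟨hy.1, hy.2.le⟩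
  rcases lt_trichotomy x b with hxb | rfl | hbx
  · rw [if_pos ⟨hax, hxb⟩]
    exact (hline x).congr_of_eventuallyEq
      (eventually_of_mem (Ioo_mem_nhds hax hxb) fun y hy => hgl ⟨hy.1.le, hy.2.le⟩)
  · rw [if_neg fun h => h.2.false, hb]
    refine (hline x).of_eventuallyEq_nhdsLE_nhdsGE ((hf' x hx).congr_deriv hb) ?_ ?_
    · exact eventually_of_mem (Ioc_mem_nhdsLE hax) fun y hy => hgl ⟨hy.1.le, hy.2⟩
    · exact eventually_of_mem self_mem_nhdsWithin fun y hy => hg₁ y (.inr hy)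
  · rw [if_neg fun h => h.2.not_gt hbx]
    refine (hf' x hx).congr_of_eventuallyEq (eventually_of_mem (Ioi_mem_nhds hbx) ?_)
    exact fun y hy => hg₁ y (.inr (mem_Ici.2 (le_of_lt hy)))

theorem monotoneOn_tangent_bridge_deriv (hpa : p < a) (hab : a < b)
    (hmono₁ : MonotoneOn f' (Ioc p a)) (hmono₂ : MonotoneOn f' (Ici b))
    (ha : f' a = c) (hb : f' b = c) :
    MonotoneOn (fun x => if x ∈ Ioo a b then c else f' x) (Ioi p) := by
  have h₁ : MonotoneOn (fun x => if x ∈ Ioo a b then c else f' x) (Ioc p a) :=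
    hmono₁.congr fun x hx => (if_neg fun h => h.1.not_ge hx.2).symm
  have h₂ : MonotoneOn (fun x => if x ∈ Ioo a b then c else f' x) (Icc a b) := by
    refine (monotoneOn_const (c := c)).congr fun x hx => ?_
    by_cases h : x ∈ Ioo a b
    · exact (if_pos h).symm
    · rw [if_neg h]
      rcases hx.1.eq_or_lt with hax | hax
      · rw [← hax, ha]
      · rw [hx.2.eq_of_not_lt fun hxb => h ⟨hax, hxb⟩, hb]
  have h₃ : MonotoneOn (fun x => if x ∈ Ioo a b then c else f' x) (Ici b) :=
    hmono₂.congr fun x hx => (if_neg fun h => h.2.not_ge hx).symm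
  have h₁₂ := h₁.union_right h₂ (isGreatest_Ioc hpa) (isLeast_Icc hab.le)
  rw [Ioc_union_Icc_eq_Ioc hpa hab.le] at h₁₂
  simpa only [Ioc_union_Ici_eq_Ioi (hpa.trans hab)] using
    h₁₂.union_right h₃ (isGreatest_Ioc (hpa.trans hab)) isLeast_Ici

theorem convexOn_Ici_of_tangent_bridge (hpa : p < a) (hab : a < b)
    (hf : ContinuousOn f (Ici p)) (hf' : ∀ x ∈ Ioi p, HasDerivAt f (f' x) x)
    (hmono₁ : MonotoneOn f' (Ioc p a)) (hmono₂ : MonotoneOn f' (Ici b))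
    (ha : f' a = c) (hb : f' b = c) (hfa : f a = c * a + d) (hfb : f b = c * b + d)
    (hg₁ : ∀ x ∈ Icc p a ∪ Ici b, g x = f x) (hg₂ : ∀ x ∈ Ioo a b, g x = c * x + d) :
    ConvexOn ℝ (Ici p) g := by
  have hg' (x : ℝ) (hx : x ∈ Ioi p) :=
    hasDerivAt_of_tangent_bridge hpa.le hab hf' ha hb hfa hfb hg₁ hg₂ hx
  have hcont : ContinuousOn g (Ici p) := by
    intro x hx
    rcases (mem_Ici.1 hx).eq_or_lt with rfl | hpx
    · refine (hf p hx).congr_of_eventuallyEq_of_mem ?_ hx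
      exact eventually_of_mem (Ico_mem_nhdsGE hpa) fun y hy => hg₁ y (.inl ⟨hy.1, hy.2.le⟩)
    · exact (hg' x hpx).continuousAt.continuousWithinAt
  refine MonotoneOn.convexOn_of_deriv (convex_Ici p) hcont ?_ ?_ <;> rw [interior_Ici]
  · exact fun x hx => (hg' x hx).differentiableAt.differentiableWithinAt
  · exact (monotoneOn_tangent_bridge_deriv hpa hab hmono₁ hmono₂ ha hb).congr
      fun x hx => (hg' x hx).deriv.symm

end TangentBridge

theorem stmt_8_general (P : ℝ) (hP : 2 < P)
    (f₂ : ℝ → ℝ) (hf₂ : ∀ B, f₂ B = 1/2 - (1/2) * erf (Real.sqrt B - Real.sqrt P))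
    (ζ₁ ζ₂ τ₁ τ₂ c d : ℝ)
    (hζ₁ : ζ₁ = ((Real.sqrt P - Real.sqrt (P - 2)) / 2)^2)
    (hζ₂ : ζ₂ = ((Real.sqrt P + Real.sqrt (P - 2)) / 2)^2)
    (hτ₁ : 0 < τ₁) (hτ₁ζ : τ₁ ≤ ζ₁) (hτ₂ζ : ζ₂ ≤ τ₂)
    (hc : c = (f₂ τ₂ - f₂ τ₁) / (τ₂ - τ₁)) (hd : d = f₂ τ₂ - c * τ₂)
    (hderiv₁ : deriv f₂ τ₁ = c) (hderiv₂ : deriv f₂ τ₂ = c)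
    (f₂bar : ℝ → ℝ)
    (hbar₁ : ∀ B ∈ Set.Icc 0 τ₁ ∪ Set.Ici τ₂, f₂bar B = f₂ B)
    (hbar₂ : ∀ B ∈ Set.Ioo τ₁ τ₂, f₂bar B = c * B + d) :
    ConvexOn ℝ (Set.Ici 0) f₂bar := by
  set q := √P
  set r := √(P - 2)
  have hq : 0 < q := sqrt_pos.2 (by linarith)
  have hr₀ : 0 < r := sqrt_pos.2 (by linarith)
  have hr : r ^ 2 = q ^ 2 - 2 := by rw [sq_sqrt (by linarith), sq_sqrt (by linarith)]
  have hζ₁₂ : ζ₁ < ζ₂ := by rw [hζ₁, hζ₂]; nlinarith [mul_pos hq hr₀]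
  have hτ₁₂ : τ₁ < τ₂ := by linarith
  have hf₂_eq : f₂ = fun B => 1/2 - (1/2) * erf (√B - q) := funext hf₂
  have hf₂' (B : ℝ) (hB : B ∈ Ioi 0) : HasDerivAt f₂ (gaussTailSlope q √B) B :=
    hf₂_eq ▸ hasDerivAt_half_sub_half_erf_sqrt_sub q hB
  have hf₂τ₁ : f₂ τ₁ = c * τ₁ + d := by
    rw [hd, hc]
    field_simp [sub_ne_zero.2 hτ₁₂.ne']
    ring
  exact convexOn_Ici_of_tangent_bridge hτ₁ hτ₁₂ (hf₂_eq ▸ by fun_prop) hf₂'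
    ((monotoneOn_gaussTailSlope_sqrt_Ioc hq.le hr₀.le hr).mono (Ioc_subset_Ioc_right (hζ₁ ▸ hτ₁ζ)))
    ((monotoneOn_gaussTailSlope_sqrt_Ici hq.le hr₀.le hr).mono (Ici_subset_Ici.2 (hζ₂ ▸ hτ₂ζ)))
    ((hf₂' τ₁ hτ₁).deriv ▸ hderiv₁) ((hf₂' τ₂ (hτ₁.trans hτ₁₂)).deriv ▸ hderiv₂) hf₂τ₁
    (by rw [hd]; ring) hbar₁ hbar₂

theorem stmt_8 (P : ℝ) (hP : 2 < P)
    (f₂ : ℝ → ℝ) (hf₂ : ∀ B, f₂ B = 1/2 - (1/2) * erf (Real.sqrt B - Real.sqrt P))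
    (ζ₁ ζ₂ τ₁ τ₂ c d : ℝ)
    (hζ₁ : ζ₁ = ((Real.sqrt P - Real.sqrt (P - 2)) / 2)^2)
    (hζ₂ : ζ₂ = ((Real.sqrt P + Real.sqrt (P - 2)) / 2)^2)
    (hτ₁ : 0 < τ₁) (hτ₁ζ : τ₁ ≤ ζ₁) (hτ₂ζ : ζ₂ ≤ τ₂)
    (hc : c = (f₂ τ₂ - f₂ τ₁) / (τ₂ - τ₁)) (hd : d = f₂ τ₂ - c * τ₂)
    (hderiv₁ : deriv f₂ τ₁ = c) (hderiv₂ : deriv f₂ τ₂ = c)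
    (hline : ∀ B : ℝ, 0 ≤ B → f₂ B ≥ c * B + d)
    (f₂bar : ℝ → ℝ)
    (hbar₁ : ∀ B ∈ Set.Icc 0 τ₁ ∪ Set.Ici τ₂, f₂bar B = f₂ B)
    (hbar₂ : ∀ B ∈ Set.Ioo τ₁ τ₂, f₂bar B = c * B + d) :
    ConvexOn ℝ (Set.Ici 0) f₂bar :=
  stmt_8_general P hP f₂ hf₂ ζ₁ ζ₂ τ₁ τ₂ c d hζ₁ hζ₂ hτ₁ hτ₁ζ hτ₂ζ hc hd hderiv₁ hderiv₂ f₂bar hbar₁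
    hbar₂
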